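/- For all real numbers a < b, each of the intervals (a,b), [a,b), and [a,b] (as subspaces of ℝ) admits a surjective interior map onto 𝐋₂; moreover, the map on [a,b] can be chosen so that both endpoints a and b are sent to the root of L₂ (the empty sequence). -/

import Mathlib

open Set

/-- Finite and infinite `σ`-valued sequences, encoded as functions `ℕ → Option σ` whose
domain of definition is an initial segment of `ℕ`. -/
structure Lgen (σ : Type*) where
  toFun : ℕ → Option σ
  init : ∀ n, toFun (n + 1) ≠ none → toFun n ≠ none

/-- The initial-segment (prefix) partial order on `Lgen σ`. -/
instance Lgen.instPartialOrder {σ : Type*} : PartialOrder (Lgen σ) where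
  le f g := ∀ (n : ℕ) (s : σ), f.toFun n = some s → g.toFun n = some s
  le_refl f n s h := h
  le_trans f g h hfg hgh n s hs := hgh n s (hfg n s hs)
  le_antisymm f g hfg hgf := by
    obtain ⟨ff, hf⟩ := f
    obtain ⟨gf, hg⟩ := g
    have hfun : ff = gf := by
      funext n
      cases hfn : ff n with
      | some s =>
        have h2 : gf n = some s := hfg n s hfn
        exact h2.symm
      | none =>
        cases hgn : gf n with
        | some s =>
          have h2 : ff n = some s := hgf n s hgn
          rw [hfn] at h2
          exact absurd h2 (by simp)
        | none => rfl
    subst hfun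
    rfl

/-- The finite sequence given by a list, as an element of `Lgen σ`. -/
def Lgen.ofList {σ : Type*} (l : List σ) : Lgen σ where
  toFun n := l[n]?
  init n h := by
    simp only [ne_eq, List.getElem?_eq_none_iff, not_le] at h ⊢
    omega

/-- The infinite binary tree with limits `L₂`: finite and infinite binary sequences with the
initial-segment order. -/
abbrev L2 : Type := Lgen Bool

/-- The Scott topology of a preorder: opens are the upper sets `U` such that every nonempty
directed set whose least upper bound lies in `U` meets `U`. -/
def scottTopology (α : Type*) [Preorder α] : TopologicalSpace α where
  IsOpen U := IsUpperSet U ∧ ∀ d : Set α, d.Nonempty → DirectedOn (· ≤ ·) d →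
      ∀ x, IsLUB d x → x ∈ U → (d ∩ U).Nonempty
  isOpen_univ := ⟨isUpperSet_univ, fun d hd _ _ _ _ => hd.imp fun y hy => ⟨hy, mem_univ y⟩⟩
  isOpen_inter := by
    rintro U V ⟨hU1, hU2⟩ ⟨hV1, hV2⟩
    refine ⟨hU1.inter hV1, fun d hdne hdir x hlub hx => ?_⟩
    obtain ⟨a, ha, haU⟩ := hU2 d hdne hdir x hlub hx.1
    obtain ⟨b, hb, hbV⟩ := hV2 d hdne hdir x hlub hx.2
    obtain ⟨c, hc, hac, hbc⟩ := hdir a ha b hb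
    exact ⟨c, hc, hU1 hac haU, hV1 hbc hbV⟩
  isOpen_sUnion := by
    intro S hS
    refine ⟨fun a b hab ha => ?_, fun d hdne hdir x hlub hx => ?_⟩
    · obtain ⟨U, hU, haU⟩ := ha
      exact ⟨U, hU, (hS U hU).1 hab haU⟩
    · obtain ⟨U, hU, hxU⟩ := hx
      obtain ⟨a, ha, haU⟩ := (hS U hU).2 d hdne hdir x hlub hxU
      exact ⟨a, ha, U, hU, haU⟩

/-- `𝐋₂`: the infinite binary tree with limits carries the Scott topology. -/
instance : TopologicalSpace L2 := scottTopology L2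

/-!
Subdivide `[a, b]` as in the construction of the middle-thirds Cantor set. Each removed open
gap has a binary address and is labelled by its last letter; then the same construction is
repeated inside the closure of every gap, and so on. A point `x` is sent to the sequence of labels
of the nested gaps containing it: a finite sequence when `x` eventually lands in the Cantor set
of some gap (the endpoints `a`, `b` lie in the outermost one and go to the root), an infinite one
otherwise.

The preimage of a basic Scott open `↑s` is a union of open gaps, so the map is continuous. The
image of each open gap is the whole cone above its label sequence, and every neighbourhood of
`x` contains either a whole deep gap around `x` or, when `x` lies in the Cantor set of a gap,
small gaps with either label next to `x`; this makes the map open and surjective.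
-/

namespace Lgen

variable {σ : Type*}

@[ext]
lemma ext {f g : Lgen σ} (h : ∀ n, f.toFun n = g.toFun n) : f = g := by
  cases f; cases g; congr; exact funext h

lemma toFun_ne_none_of_le (z : Lgen σ) {m n : ℕ} (hmn : m ≤ n) (hn : z.toFun n ≠ none) :
    z.toFun m ≠ none := by
  induction n, hmn using Nat.le_induction with
  | base => exact hn
  | succ n _ ih => exact ih (z.init n hn)

@[simp]
lemma ofList_toFun (l : List σ) (n : ℕ) : (ofList l).toFun n = l[n]? := rfl

lemma ofList_le_iff {l : List σ} {z : Lgen σ} :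
    ofList l ≤ z ↔ ∀ k < l.length, z.toFun k = l[k]? := by
  refine ⟨fun h k hk => h k l[k] (by simp [hk]) |>.trans (by simp [hk]), fun h k s hk => ?_⟩
  rw [ofList_toFun, List.getElem?_eq_some_iff] at hk
  obtain ⟨hk, rfl⟩ := hk
  simp [h k hk]

lemma ofList_nil_le (z : Lgen σ) : ofList [] ≤ z := fun _ _ h => by simp at h

lemma ofList_append_singleton_le {l : List σ} {z : Lgen σ} {s : σ} (hl : ofList l ≤ z)
    (hs : z.toFun l.length = some s) : ofList (l ++ [s]) ≤ z := by
  refine ofList_le_iff.2 fun k hk => ?_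
  rcases (Nat.lt_succ_iff.1 (by simpa using hk)).lt_or_eq with hk | rfl
  · rw [ofList_le_iff.1 hl k hk, List.getElem?_append_left hk]
  · simp [hs]

lemma ofList_le_ofList_of_le {l l' : List σ} {z : Lgen σ} (h : ofList l ≤ z)
    (h' : ofList l' ≤ z) (hlen : l.length ≤ l'.length) : ofList l ≤ ofList l' :=
  ofList_le_iff.2 fun k hk => by
    rw [ofList_toFun, ← ofList_le_iff.1 h' k (by omega), ofList_le_iff.1 h k hk]

lemma isPrefix_of_ofList_le_ofList {l l' : List σ} (h : ofList l ≤ ofList l') : l <+: l' := by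
  refine List.prefix_iff_eq_take.2 (List.ext_getElem? fun k => ?_)
  rw [List.getElem?_take]
  split_ifs with hk
  · exact (ofList_le_iff.1 h k hk).symm
  · simp; omega

lemma eq_ofList {l : List σ} {z : Lgen σ} (h : ∀ k ≤ l.length, z.toFun k = l[k]?) :
    z = ofList l := by
  refine ext fun k => ?_
  rcases le_or_gt k l.length with hk | hk
  · exact h k hk
  · have hnone : z.toFun l.length = none := by simpa using h _ le_rfl
    rw [ofList_toFun, List.getElem?_eq_none hk.le]
    by_contra hne
    exact z.toFun_ne_none_of_le hk.le hne hnone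

lemma exists_ofList_le_or_eq_ofList (z : Lgen σ) (n : ℕ) :
    (∃ l : List σ, l.length = n ∧ ofList l ≤ z) ∨ ∃ l : List σ, z = ofList l := by
  induction n with
  | zero => exact .inl ⟨[], rfl, ofList_nil_le z⟩
  | succ n ih =>
    obtain ⟨l, rfl, hl⟩ | h := ih
    · cases hs : z.toFun l.length with
      | some s => exact .inl ⟨l ++ [s], by simp, ofList_append_singleton_le hl hs⟩
      | none =>
        refine .inr ⟨l, eq_ofList fun k hk => ?_⟩
        rcases hk.lt_or_eq with hk | rfl
        · exact ofList_le_iff.1 hl k hk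
        · simpa using hs
    · exact .inr h

lemma exists_eq_ofList {z : Lgen σ} {n : ℕ} (hn : z.toFun n = none) : ∃ l, z = ofList l := by
  refine (exists_ofList_le_or_eq_ofList z (n + 1)).resolve_left ?_
  rintro ⟨l, hl, hle⟩
  have := ofList_le_iff.1 hle n (by omega)
  simp_all

lemma exists_ofList_le_of_toFun_ne_none {z : Lgen σ} {n : ℕ} (hn : z.toFun n ≠ none) :
    ∃ l, n < l.length ∧ ofList l ≤ z := by
  obtain ⟨l, hl, hle⟩ | ⟨l, rfl⟩ := exists_ofList_le_or_eq_ofList z (n + 1)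
  · exact ⟨l, by omega, hle⟩
  · exact ⟨l, by simpa using hn, le_rfl⟩

lemma isLUB_ofList_le (z : Lgen σ) : IsLUB (ofList '' {l | ofList l ≤ z}) z := by
  refine ⟨by rintro _ ⟨l, hl, rfl⟩; exact hl, fun w hw k s hk => ?_⟩
  obtain ⟨l, hkl, hl⟩ := exists_ofList_le_of_toFun_ne_none (z := z) (n := k) (by simp [hk])
  have hlk : l[k]? = some s := by rw [← ofList_le_iff.1 hl k hkl, hk]
  exact hw ⟨l, hl, rfl⟩ k s hlk

lemma directedOn_ofList_le (z : Lgen σ) :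
    DirectedOn (· ≤ ·) (ofList '' {l | ofList l ≤ z}) := by
  rintro _ ⟨l, hl, rfl⟩ _ ⟨l', hl', rfl⟩
  rcases le_total l.length l'.length with h | h
  · exact ⟨ofList l', ⟨l', hl', rfl⟩, ofList_le_ofList_of_le hl hl' h, le_rfl⟩
  · exact ⟨ofList l, ⟨l, hl, rfl⟩, le_rfl, ofList_le_ofList_of_le hl' hl h⟩

end Lgen

namespace L2

open Lgen TopologicalSpace

lemma isOpen_Ici_ofList (l : List Bool) : IsOpen (Ici (ofList l)) := by
  refine ⟨isUpperSet_Ici _, fun d hd _ y hy hly => ?_⟩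
  rcases l.eq_nil_or_concat' with rfl | ⟨l, s, rfl⟩
  · exact hd.mono fun c hc => ⟨hc, ofList_nil_le c⟩
  have hyl : ∀ k < l.length + 1, y.toFun k = (l ++ [s])[k]? := by
    simpa using ofList_le_iff.1 hly
  obtain ⟨c, hc, hcl⟩ : ∃ c ∈ d, c.toFun l.length ≠ none := by
    -- otherwise `ofList l` bounds `d` from above without lying above its supremum `y`
    by_contra! h
    have hub : ofList l ∈ upperBounds d := fun c hc k v hk => by
      have hkl : k < l.length := by
        by_contra! hkl
        exact c.toFun_ne_none_of_le hkl (by simp [hk]) (h c hc)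
      rw [ofList_toFun, ← List.getElem?_append_left (l₂ := [s]) hkl, ← hyl k (by omega)]
      exact hy.1 hc k v hk
    simpa using hy.2 hub l.length s (by simpa using hyl l.length (by omega))
  refine ⟨c, hc, ofList_le_iff.2 fun k hk => ?_⟩
  have hkl : k ≤ l.length := by simp at hk; omega
  obtain ⟨v, hv⟩ := Option.ne_none_iff_exists'.1 (c.toFun_ne_none_of_le hkl hcl)
  rw [hv, ← hyl k (by omega)]
  exact (hy.1 hc k v hv).symm

lemma exists_Ici_ofList_subset {U : Set L2} (hU : IsOpen U) {z : L2} (hz : z ∈ U) :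
    ∃ l : List Bool, ofList l ≤ z ∧ Ici (ofList l) ⊆ U := by
  obtain ⟨hup, hscott⟩ := hU
  obtain ⟨_, ⟨l, hl, rfl⟩, hlU⟩ := hscott (ofList '' {l | ofList l ≤ z})
    ⟨ofList [], [], ofList_nil_le z, rfl⟩
    (directedOn_ofList_le z) z (isLUB_ofList_le z) hz
  exact ⟨l, hl, fun y hy => hup hy hlU⟩

lemma isTopologicalBasis_Ici_ofList :
    IsTopologicalBasis (range fun l : List Bool => Ici (ofList l)) :=
  isTopologicalBasis_of_isOpen_of_nhds (by rintro _ ⟨l, rfl⟩; exact isOpen_Ici_ofList l)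
    fun _ _ hz hU =>
      let ⟨l, hl, hlU⟩ := exists_Ici_ofList_subset hU hz
      ⟨_, ⟨l, rfl⟩, hl, hlU⟩

end L2

/-! An interval is encoded by the pair of its endpoints; `cantorCell p w` is the closed cell with
binary address `w` (`false` for the left third) in the middle-thirds construction on `p`. -/

noncomputable def middleThird (p : ℝ × ℝ) : ℝ × ℝ :=
  (p.1 + (p.2 - p.1) / 3, p.2 - (p.2 - p.1) / 3)

noncomputable def outerThird (p : ℝ × ℝ) : Bool → ℝ × ℝ
  | false => (p.1, (middleThird p).1)
  | true => ((middleThird p).2, p.2)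

noncomputable def cantorCell (p : ℝ × ℝ) (w : List Bool) : ℝ × ℝ := w.foldl outerThird p

noncomputable def cantorGap (p : ℝ × ℝ) (w : List Bool) : ℝ × ℝ :=
  middleThird (cantorCell p w)

def InCantorSet (p : ℝ × ℝ) (x : ℝ) : Prop :=
  ∀ n, ∃ w : List Bool, w.length = n ∧ x ∈ Icc (cantorCell p w).1 (cantorCell p w).2

section CantorScheme

variable {p : ℝ × ℝ} {x : ℝ}

lemma middleThird_fst_lt (hp : p.1 < p.2) : (middleThird p).1 < (middleThird p).2 := by
  simp only [middleThird]; linarith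

lemma Icc_middleThird_subset (hp : p.1 < p.2) :
    Icc (middleThird p).1 (middleThird p).2 ⊆ Ioo p.1 p.2 :=
  Icc_subset_Ioo (by simp only [middleThird]; linarith) (by simp only [middleThird]; linarith)

lemma outerThird_sub (p : ℝ × ℝ) (b : Bool) :
    (outerThird p b).2 - (outerThird p b).1 = (p.2 - p.1) / 3 := by
  cases b <;> simp only [outerThird, middleThird] <;> ring

lemma Icc_outerThird_subset (hp : p.1 ≤ p.2) (b : Bool) :
    Icc (outerThird p b).1 (outerThird p b).2 ⊆ Icc p.1 p.2 := by
  cases b <;> exact Icc_subset_Icc (by simp only [outerThird, middleThird]; linarith)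
    (by simp only [outerThird, middleThird]; linarith)

lemma notMem_Icc_outerThird (hx : x ∈ Ioo (middleThird p).1 (middleThird p).2) (b : Bool) :
    x ∉ Icc (outerThird p b).1 (outerThird p b).2 := by
  cases b <;> simp only [outerThird, mem_Icc, not_and_or, not_le] <;> simp only [mem_Ioo] at hx
  · exact .inr hx.1
  · exact .inl hx.2

@[simp]
lemma cantorCell_cons (p : ℝ × ℝ) (b : Bool) (w : List Bool) :
    cantorCell p (b :: w) = cantorCell (outerThird p b) w := rfl

lemma cantorCell_append (p : ℝ × ℝ) (w w' : List Bool) :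
    cantorCell p (w ++ w') = cantorCell (cantorCell p w) w' :=
  List.foldl_append

lemma cantorCell_sub (p : ℝ × ℝ) (w : List Bool) :
    (cantorCell p w).2 - (cantorCell p w).1 = (p.2 - p.1) / 3 ^ w.length := by
  induction w generalizing p with
  | nil => simp [cantorCell]
  | cons b w ih => rw [cantorCell_cons, ih, outerThird_sub, List.length_cons, pow_succ', div_div]

lemma cantorCell_fst_lt (hp : p.1 < p.2) (w : List Bool) :
    (cantorCell p w).1 < (cantorCell p w).2 := by
  have := cantorCell_sub p w
  have : 0 < (p.2 - p.1) / 3 ^ w.length := by apply div_pos <;> [linarith; positivity]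
  linarith

lemma Icc_cantorCell_subset (hp : p.1 < p.2) (w : List Bool) :
    Icc (cantorCell p w).1 (cantorCell p w).2 ⊆ Icc p.1 p.2 := by
  induction w generalizing p with
  | nil => exact subset_rfl
  | cons b w ih => exact (ih (cantorCell_fst_lt hp [b])).trans (Icc_outerThird_subset hp.le b)

lemma Icc_cantorCell_append_subset (hp : p.1 < p.2) (w w' : List Bool) :
    Icc (cantorCell p (w ++ w')).1 (cantorCell p (w ++ w')).2 ⊆
      Icc (cantorCell p w).1 (cantorCell p w).2 := by
  rw [cantorCell_append]
  exact Icc_cantorCell_subset (cantorCell_fst_lt hp w) w'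

lemma isPrefix_of_mem_cantorCell (hp : p.1 < p.2) {w w' : List Bool}
    (hlen : w.length ≤ w'.length) (hx : x ∈ Icc (cantorCell p w).1 (cantorCell p w).2)
    (hx' : x ∈ Icc (cantorCell p w').1 (cantorCell p w').2) : w <+: w' := by
  induction w generalizing p w' with
  | nil => exact List.nil_prefix
  | cons b w ih =>
    obtain _ | ⟨b', w'⟩ := w'
    · simp at hlen
    have hb := Icc_cantorCell_subset (cantorCell_fst_lt hp [b]) w hx
    have hb' := Icc_cantorCell_subset (cantorCell_fst_lt hp [b']) w' hx'
    obtain rfl : b = b' := by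
      cases b <;> cases b' <;> simp only [cantorCell, List.foldl, outerThird, middleThird,
        mem_Icc] at hb hb' ⊢ <;> linarith
    exact List.cons_prefix_cons.2
      ⟨rfl, ih (cantorCell_fst_lt hp [b]) (by simpa using hlen) hx hx'⟩

lemma Icc_cantorGap_subset_Ioo_cantorCell (hp : p.1 < p.2) (w : List Bool) :
    Icc (cantorGap p w).1 (cantorGap p w).2 ⊆ Ioo (cantorCell p w).1 (cantorCell p w).2 :=
  Icc_middleThird_subset (cantorCell_fst_lt hp w)

lemma Icc_cantorGap_subset (hp : p.1 < p.2) (w : List Bool) :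
    Icc (cantorGap p w).1 (cantorGap p w).2 ⊆ Ioo p.1 p.2 := by
  obtain ⟨h₁, h₂⟩ :=
    (Icc_subset_Icc_iff (cantorCell_fst_lt hp w).le).1 (Icc_cantorCell_subset hp w)
  exact (Icc_cantorGap_subset_Ioo_cantorCell hp w).trans (Ioo_subset_Ioo h₁ h₂)

lemma cantorGap_fst_lt (hp : p.1 < p.2) (w : List Bool) : (cantorGap p w).1 < (cantorGap p w).2 :=
  middleThird_fst_lt (cantorCell_fst_lt hp w)

lemma cantorGap_sub_le (hp : p.1 < p.2) (w : List Bool) :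
    (cantorGap p w).2 - (cantorGap p w).1 ≤ (p.2 - p.1) / 3 := by
  have : (cantorGap p w).2 - (cantorGap p w).1 = ((cantorCell p w).2 - (cantorCell p w).1) / 3 := by
    simp only [cantorGap, middleThird]; ring
  rw [this, cantorCell_sub]
  gcongr
  exact div_le_self (by linarith) (one_le_pow₀ (by norm_num))

lemma notMem_cantorGap_of_mem_cantorCell (hp : p.1 < p.2) {w w' : List Bool}
    (hlen : w.length < w'.length) (hx : x ∈ Icc (cantorCell p w').1 (cantorCell p w').2) :
    x ∉ Ioo (cantorGap p w).1 (cantorGap p w).2 := by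
  intro hgap
  have hxw :=
    Ioo_subset_Icc_self (Icc_cantorGap_subset_Ioo_cantorCell hp w (Ioo_subset_Icc_self hgap))
  obtain ⟨_ | ⟨b, r⟩, rfl⟩ := isPrefix_of_mem_cantorCell hp hlen.le hxw hx
  · simp at hlen
  · have := Icc_cantorCell_append_subset hp (w ++ [b]) r (by simpa using hx)
    rw [cantorCell_append] at this
    exact notMem_Icc_outerThird hgap b this

lemma eq_of_mem_cantorGap (hp : p.1 < p.2) {w w' : List Bool}
    (hx : x ∈ Ioo (cantorGap p w).1 (cantorGap p w).2)
    (hx' : x ∈ Ioo (cantorGap p w').1 (cantorGap p w').2) : w = w' := by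
  have hc := Ioo_subset_Icc_self (Icc_cantorGap_subset_Ioo_cantorCell hp w (Ioo_subset_Icc_self hx))
  have hc' :=
    Ioo_subset_Icc_self (Icc_cantorGap_subset_Ioo_cantorCell hp w' (Ioo_subset_Icc_self hx'))
  rcases lt_trichotomy w.length w'.length with h | h | h
  · exact absurd hx (notMem_cantorGap_of_mem_cantorCell hp h hc')
  · exact (isPrefix_of_mem_cantorCell hp h.le hc hc').eq_of_length h
  · exact absurd hx' (notMem_cantorGap_of_mem_cantorCell hp h hc)

lemma InCantorSet.notMem_cantorGap (hp : p.1 < p.2) (hx : InCantorSet p x) (w : List Bool) :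
    x ∉ Ioo (cantorGap p w).1 (cantorGap p w).2 := by
  obtain ⟨w', hw', hxw'⟩ := hx (w.length + 1)
  exact notMem_cantorGap_of_mem_cantorCell hp (by omega) hxw'

lemma inCantorSet_of_forall_notMem_cantorGap (hx : x ∈ Icc p.1 p.2)
    (h : ∀ w, x ∉ Ioo (cantorGap p w).1 (cantorGap p w).2) : InCantorSet p x := by
  intro n
  induction n with
  | zero => exact ⟨[], rfl, hx⟩
  | succ n ih =>
    obtain ⟨w, rfl, hw⟩ := ih
    obtain ⟨b, hb⟩ : ∃ b, x ∈ Icc (outerThird (cantorCell p w) b).1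
        (outerThird (cantorCell p w) b).2 := by
      rcases le_or_gt x (middleThird (cantorCell p w)).1 with h₁ | h₁
      · exact ⟨false, hw.1, h₁⟩
      · exact ⟨true, le_of_not_gt fun h₂ => h w ⟨h₁, h₂⟩, hw.2⟩
    exact ⟨w ++ [b], by simp, by rwa [cantorCell_append]⟩

lemma cantorCell_replicate_true_snd (p : ℝ × ℝ) (n : ℕ) :
    (cantorCell p (List.replicate n true)).2 = p.2 := by
  induction n generalizing p with
  | zero => rfl
  | succ n ih => exact ih _

lemma inCantorSet_middleThird_fst (hp : p.1 < p.2) : InCantorSet p (middleThird p).1 := by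
  rintro (_ | n)
  · exact ⟨[], rfl, Ioo_subset_Icc_self (Icc_middleThird_subset hp
      ⟨le_rfl, (middleThird_fst_lt hp).le⟩)⟩
  · refine ⟨false :: List.replicate n true, by simp, ?_⟩
    have h := cantorCell_replicate_true_snd (outerThird p false) n
    have h' := cantorCell_fst_lt hp (false :: List.replicate n true)
    rw [cantorCell_cons] at h' ⊢
    exact ⟨h'.le.trans_eq h, h.ge⟩

lemma Icc_subset_ball_of_mem {u v ε : ℝ} (hx : x ∈ Icc u v) (h : v - u < ε) :
    Icc u v ⊆ Metric.ball x ε := by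
  intro y hy
  rw [Real.ball_eq_Ioo]
  constructor <;> linarith [hx.1, hx.2, hy.1, hy.2]

lemma exists_div_pow_three_lt (c : ℝ) {ε : ℝ} (hε : 0 < ε) :
    ∃ n : ℕ, c / 3 ^ n < ε := by
  obtain ⟨n, hn⟩ := pow_unbounded_of_one_lt (c / ε) (by norm_num : (1 : ℝ) < 3)
  exact ⟨n, by rwa [div_lt_iff₀ (by positivity), mul_comm, ← div_lt_iff₀ hε]⟩

end CantorScheme

/-- Labelling a gap by the last letter of its address puts gaps of both labels inside every
cell, hence arbitrarily close to every point of the Cantor set. -/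
def gapLabel (w : List Bool) : Bool := w.getLastD false

lemma InCantorSet.exists_cantorGap_subset_ball {p : ℝ × ℝ} {x ε : ℝ} (hp : p.1 < p.2)
    (hx : InCantorSet p x) (hε : 0 < ε) (b : Bool) :
    ∃ w, gapLabel w = b ∧ Icc (cantorGap p w).1 (cantorGap p w).2 ⊆ Metric.ball x ε := by
  obtain ⟨n, hn⟩ := exists_div_pow_three_lt (p.2 - p.1) hε
  obtain ⟨w, rfl, hw⟩ := hx n
  refine ⟨w ++ [b], List.getLastD_concat, ?_⟩
  calc Icc (cantorGap p (w ++ [b])).1 (cantorGap p (w ++ [b])).2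
      ⊆ Icc (cantorCell p (w ++ [b])).1 (cantorCell p (w ++ [b])).2 :=
        (Icc_cantorGap_subset_Ioo_cantorCell hp _).trans Ioo_subset_Icc_self
    _ ⊆ Icc (cantorCell p w).1 (cantorCell p w).2 := Icc_cantorCell_append_subset hp w [b]
    _ ⊆ Metric.ball x ε := Icc_subset_ball_of_mem hw (by rwa [cantorCell_sub])

noncomputable def nestedGap (p : ℝ × ℝ) (t : List (List Bool)) : ℝ × ℝ :=
  t.foldl cantorGap p

section NestedGap

variable {p : ℝ × ℝ} {x : ℝ}

lemma nestedGap_append (p : ℝ × ℝ) (t t' : List (List Bool)) :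
    nestedGap p (t ++ t') = nestedGap (nestedGap p t) t' :=
  List.foldl_append

lemma nestedGap_fst_lt (hp : p.1 < p.2) (t : List (List Bool)) :
    (nestedGap p t).1 < (nestedGap p t).2 := by
  induction t generalizing p with
  | nil => exact hp
  | cons w t ih => exact ih (cantorGap_fst_lt hp w)

lemma Ioo_nestedGap_subset (hp : p.1 < p.2) (t : List (List Bool)) :
    Ioo (nestedGap p t).1 (nestedGap p t).2 ⊆ Ioo p.1 p.2 := by
  induction t generalizing p with
  | nil => exact subset_rfl
  | cons w t ih =>
    exact (ih (cantorGap_fst_lt hp w)).trans (Ioo_subset_Icc_self.trans (Icc_cantorGap_subset hp w))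

lemma Ioo_nestedGap_append_subset (hp : p.1 < p.2) (t t' : List (List Bool)) :
    Ioo (nestedGap p (t ++ t')).1 (nestedGap p (t ++ t')).2 ⊆
      Ioo (nestedGap p t).1 (nestedGap p t).2 := by
  rw [nestedGap_append]
  exact Ioo_nestedGap_subset (nestedGap_fst_lt hp t) t'

lemma nestedGap_sub_le (hp : p.1 < p.2) (t : List (List Bool)) :
    (nestedGap p t).2 - (nestedGap p t).1 ≤ (p.2 - p.1) / 3 ^ t.length := by
  induction t generalizing p with
  | nil => simp [nestedGap]
  | cons w t ih =>
    calc (nestedGap p (w :: t)).2 - (nestedGap p (w :: t)).1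
        ≤ ((cantorGap p w).2 - (cantorGap p w).1) / 3 ^ t.length := ih (cantorGap_fst_lt hp w)
      _ ≤ (p.2 - p.1) / 3 / 3 ^ t.length := by gcongr; exact cantorGap_sub_le hp w
      _ = (p.2 - p.1) / 3 ^ (w :: t).length := by rw [List.length_cons, pow_succ', div_div]

lemma isPrefix_of_mem_nestedGap (hp : p.1 < p.2) {t t' : List (List Bool)}
    (hlen : t.length ≤ t'.length) (hx : x ∈ Ioo (nestedGap p t).1 (nestedGap p t).2)
    (hx' : x ∈ Ioo (nestedGap p t').1 (nestedGap p t').2) : t <+: t' := by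
  induction t generalizing p t' with
  | nil => exact List.nil_prefix
  | cons w t ih =>
    obtain _ | ⟨w', t'⟩ := t'
    · simp at hlen
    obtain rfl : w = w' := eq_of_mem_cantorGap hp
      (Ioo_nestedGap_subset (cantorGap_fst_lt hp w) t hx)
      (Ioo_nestedGap_subset (cantorGap_fst_lt hp w') t' hx')
    exact List.cons_prefix_cons.2 ⟨rfl, ih (cantorGap_fst_lt hp w) (by simpa using hlen) hx hx'⟩

lemma exists_forall_mem_nestedGap (hp : p.1 < p.2) (A : ℕ → List Bool) :
    ∃ x, ∀ n, x ∈ Ioo (nestedGap p ((List.range n).map A)).1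
      (nestedGap p ((List.range n).map A)).2 := by
  set I : ℕ → ℝ × ℝ := fun n => nestedGap p ((List.range n).map A)
  have hsub (n : ℕ) : Icc (I (n + 1)).1 (I (n + 1)).2 ⊆ Ioo (I n).1 (I n).2 := by
    simp only [I, List.range_succ, List.map_append, nestedGap_append]
    exact Icc_cantorGap_subset (nestedGap_fst_lt hp _) (A n)
  obtain ⟨x, hx⟩ := IsCompact.nonempty_iInter_of_sequence_nonempty_isCompact_isClosed
    (fun n => Icc (I n).1 (I n).2) (fun n => (hsub n).trans Ioo_subset_Icc_self)
    (fun n => nonempty_Icc.2 (nestedGap_fst_lt hp _).le) isCompact_Icc (fun _ => isClosed_Icc)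
  exact ⟨x, fun n => hsub n (mem_iInter.1 hx (n + 1))⟩

end NestedGap

open Classical in
/-- The chain of nested gaps containing `x` is unique (`isPrefix_of_mem_nestedGap`), so the
choice made here is immaterial. -/
noncomputable def gapMap (p : ℝ × ℝ) (x : ℝ) : L2 where
  toFun n := if h : ∃ t : List (List Bool), n < t.length ∧
      x ∈ Ioo (nestedGap p t).1 (nestedGap p t).2 then (h.choose.map gapLabel)[n]? else none
  init n h := by
    split_ifs at h with h₁
    · obtain ⟨t, ht, hx⟩ := h₁
      have h₂ : ∃ t : List (List Bool), n < t.length ∧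
          x ∈ Ioo (nestedGap p t).1 (nestedGap p t).2 := ⟨t, by omega, hx⟩
      rw [dif_pos h₂]
      simpa using h₂.choose_spec.1
    · exact absurd rfl h

section GapMap

open Lgen

variable {p : ℝ × ℝ} {x : ℝ} {t : List (List Bool)}

lemma gapMap_toFun (hp : p.1 < p.2) (hx : x ∈ Ioo (nestedGap p t).1 (nestedGap p t).2) {n : ℕ}
    (hn : n < t.length) : (gapMap p x).toFun n = (t.map gapLabel)[n]? := by
  have h : ∃ t' : List (List Bool), n < t'.length ∧
      x ∈ Ioo (nestedGap p t').1 (nestedGap p t').2 := ⟨t, hn, hx⟩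
  obtain ⟨hn', hx'⟩ := h.choose_spec
  have key : h.choose[n]? = t[n]? := by
    rcases le_total h.choose.length t.length with hl | hl
    · obtain ⟨r, hr⟩ := isPrefix_of_mem_nestedGap hp hl hx' hx
      rw [← hr, List.getElem?_append_left hn']
    · obtain ⟨r, hr⟩ := isPrefix_of_mem_nestedGap hp hl hx hx'
      rw [← hr, List.getElem?_append_left hn]
  simp only [gapMap, dif_pos h, List.getElem?_map, key]

lemma ofList_le_gapMap (hp : p.1 < p.2) (hx : x ∈ Ioo (nestedGap p t).1 (nestedGap p t).2) :
    ofList (t.map gapLabel) ≤ gapMap p x :=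
  ofList_le_iff.2 fun _ hk => gapMap_toFun hp hx (by simpa using hk)

lemma exists_mem_nestedGap_of_toFun_ne_none (hp : p.1 < p.2) {n : ℕ}
    (h : (gapMap p x).toFun n ≠ none) :
    ∃ t : List (List Bool), t.length = n + 1 ∧
      x ∈ Ioo (nestedGap p t).1 (nestedGap p t).2 := by
  obtain ⟨t, ht, hx⟩ : ∃ t : List (List Bool), n < t.length ∧
      x ∈ Ioo (nestedGap p t).1 (nestedGap p t).2 := by
    by_contra hex
    exact h (dif_neg hex)
  refine ⟨t.take (n + 1), by simp; omega, ?_⟩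
  rw [← List.take_append_drop (n + 1) t] at hx
  exact Ioo_nestedGap_append_subset hp _ _ hx

lemma exists_mem_nestedGap_of_ofList_le_gapMap (hp : p.1 < p.2) {l : List Bool} (hl : l ≠ [])
    (h : ofList l ≤ gapMap p x) :
    ∃ t : List (List Bool), t.map gapLabel = l ∧
      x ∈ Ioo (nestedGap p t).1 (nestedGap p t).2 := by
  have hlen : l.length - 1 < l.length := by have := List.length_pos_iff.2 hl; omega
  obtain ⟨t, ht, hx⟩ := exists_mem_nestedGap_of_toFun_ne_none hp (x := x)
    (n := l.length - 1) (by simp [ofList_le_iff.1 h _ hlen, hl])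
  have hlen' : (t.map gapLabel).length = l.length := by simp; omega
  have hle := ofList_le_ofList_of_le (ofList_le_gapMap hp hx) h hlen'.le
  exact ⟨t, (isPrefix_of_ofList_le_ofList hle).eq_of_length hlen', hx⟩

lemma gapMap_of_notMem (hp : p.1 < p.2) (hx : x ∉ Ioo p.1 p.2) : gapMap p x = ofList [] := by
  refine eq_ofList fun k hk => ?_
  obtain rfl : k = 0 := by simpa using hk
  by_contra h
  obtain ⟨t, -, hxt⟩ := exists_mem_nestedGap_of_toFun_ne_none hp (by simpa using h)
  exact hx (Ioo_nestedGap_subset hp t hxt)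

lemma gapMap_eq_of_inCantorSet (hp : p.1 < p.2)
    (hx : x ∈ Ioo (nestedGap p t).1 (nestedGap p t).2) (hC : InCantorSet (nestedGap p t) x) :
    gapMap p x = ofList (t.map gapLabel) := by
  refine eq_ofList fun k hk => ?_
  rcases hk.lt_or_eq with hk | rfl
  · exact gapMap_toFun hp hx (by simpa using hk)
  rw [List.getElem?_eq_none le_rfl]
  by_contra h
  obtain ⟨t', ht', hx'⟩ := exists_mem_nestedGap_of_toFun_ne_none hp h
  obtain ⟨r, rfl⟩ := isPrefix_of_mem_nestedGap hp (by simp at ht'; omega) hx hx'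
  obtain ⟨w, rfl⟩ : ∃ w, r = [w] := List.length_eq_one_iff.1 (by simp at ht'; omega)
  rw [nestedGap_append] at hx'
  exact hC.notMem_cantorGap (nestedGap_fst_lt hp t) w hx'

lemma inCantorSet_of_gapMap_eq (hp : p.1 < p.2)
    (hx : x ∈ Icc (nestedGap p t).1 (nestedGap p t).2)
    (h : gapMap p x = ofList (t.map gapLabel)) :
    InCantorSet (nestedGap p t) x := by
  refine inCantorSet_of_forall_notMem_cantorGap hx fun w hw => ?_
  have hx' : x ∈ Ioo (nestedGap p (t ++ [w])).1 (nestedGap p (t ++ [w])).2 := by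
    rwa [nestedGap_append]
  have := gapMap_toFun hp hx' (n := t.length) (by simp)
  simp [h] at this

end GapMap

section GapMap

open Lgen Topology

variable {p : ℝ × ℝ} {x : ℝ} {t : List (List Bool)}

lemma ofList_mem_image_gapMap (hp : p.1 < p.2) {l : List Bool}
    (hl : ofList (t.map gapLabel) ≤ ofList l) :
    ofList l ∈ gapMap p '' Ioo (nestedGap p t).1 (nestedGap p t).2 := by
  obtain ⟨r, rfl⟩ := isPrefix_of_ofList_le_ofList hl
  set t' := t ++ r.map fun b => [b]
  have hq := nestedGap_fst_lt hp t'
  have hx : (middleThird (nestedGap p t')).1 ∈ Ioo (nestedGap p t').1 (nestedGap p t').2 :=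
    Icc_middleThird_subset hq ⟨le_rfl, (middleThird_fst_lt hq).le⟩
  refine ⟨_, Ioo_nestedGap_append_subset hp t _ hx, ?_⟩
  rw [gapMap_eq_of_inCantorSet hp hx (inCantorSet_middleThird_fst hq)]
  simp [t', Function.comp_def, gapLabel]

lemma mem_image_gapMap_of_forall_toFun_ne_none (hp : p.1 < p.2) {z : L2}
    (hz : ofList (t.map gapLabel) ≤ z) (hinf : ∀ n, z.toFun n ≠ none) :
    z ∈ gapMap p '' Ioo (nestedGap p t).1 (nestedGap p t).2 := by
  let A (n : ℕ) : List Bool := t.getD n [(z.toFun n).getD false]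
  obtain ⟨x, hx⟩ := exists_forall_mem_nestedGap hp A
  have hA : (List.range t.length).map A = t :=
    List.ext_getElem (by simp) fun n _ h => by simp [A, List.getElem?_eq_getElem h]
  refine ⟨x, hA ▸ hx t.length, Lgen.ext fun n => ?_⟩
  rw [gapMap_toFun hp (hx (n + 1)) (by simp)]
  simp only [List.getElem?_map, List.getElem?_range (Nat.lt_succ_self n), Option.map_some]
  rcases lt_or_ge n t.length with hn | hn
  · simpa [A, List.getElem?_eq_getElem hn] using (ofList_le_iff.1 hz n (by simpa using hn)).symm
  · obtain ⟨b, hb⟩ := Option.ne_none_iff_exists'.1 (hinf n)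
    simp [A, List.getElem?_eq_none hn, hb, gapLabel]

lemma image_gapMap_Ioo_nestedGap (hp : p.1 < p.2) (t : List (List Bool)) :
    gapMap p '' Ioo (nestedGap p t).1 (nestedGap p t).2 = Ici (ofList (t.map gapLabel)) := by
  refine Subset.antisymm (image_subset_iff.2 fun x hx => ofList_le_gapMap hp hx) fun z hz => ?_
  by_cases hfin : ∃ n, z.toFun n = none
  · obtain ⟨l, rfl⟩ := exists_eq_ofList hfin.choose_spec
    exact ofList_mem_image_gapMap hp hz
  · simp only [not_exists] at hfin
    exact mem_image_gapMap_of_forall_toFun_ne_none hp hz hfin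

lemma Ici_subset_image_gapMap_of_inCantorSet (hp : p.1 < p.2) {S : Set ℝ} {ε : ℝ}
    (hε : 0 < ε)
    (hC : InCantorSet (nestedGap p t) x) (hfx : gapMap p x = ofList (t.map gapLabel))
    (hxS : x ∈ S) (hS : Metric.ball x ε ∩ Ioo p.1 p.2 ⊆ S) :
    Ici (ofList (t.map gapLabel)) ⊆ gapMap p '' S := by
  intro z hz
  cases hzn : z.toFun t.length with
  | none =>
    refine ⟨x, hxS, hfx.trans (eq_ofList fun k hk => ?_).symm⟩
    rcases hk.lt_or_eq with hk | rfl
    · exact ofList_le_iff.1 hz k hk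
    · simpa using hzn
  | some b =>
    obtain ⟨w, rfl, hw⟩ := hC.exists_cantorGap_subset_ball (nestedGap_fst_lt hp t) hε b
    have hz' : z ∈ Ici (ofList ((t ++ [w]).map gapLabel)) := by
      simpa using ofList_append_singleton_le hz (by simpa using hzn)
    rw [← image_gapMap_Ioo_nestedGap hp] at hz'
    refine image_mono (fun y hy => hS ⟨?_, Ioo_nestedGap_subset hp _ hy⟩) hz'
    rw [nestedGap_append] at hy
    exact hw (Ioo_subset_Icc_self hy)

lemma exists_Ici_subset_image_gapMap (hp : p.1 < p.2) {S : Set ℝ} (hx : x ∈ Icc p.1 p.2)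
    (hxS : x ∈ S) (hS : S ∈ 𝓝[Ioo p.1 p.2] x) :
    ∃ l, ofList l ≤ gapMap p x ∧ Ici (ofList l) ⊆ gapMap p '' S := by
  obtain ⟨ε, hε, hball⟩ := Metric.mem_nhdsWithin_iff.1 hS
  by_cases hfin : ∃ n, (gapMap p x).toFun n = none
  · obtain ⟨l, hl⟩ := exists_eq_ofList hfin.choose_spec
    obtain ⟨t, rfl, hxt⟩ : ∃ t : List (List Bool), t.map gapLabel = l ∧
        x ∈ Icc (nestedGap p t).1 (nestedGap p t).2 := by
      rcases eq_or_ne l [] with rfl | hne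
      · exact ⟨[], rfl, hx⟩
      · obtain ⟨t, ht, hxt⟩ := exists_mem_nestedGap_of_ofList_le_gapMap hp hne hl.ge
        exact ⟨t, ht, Ioo_subset_Icc_self hxt⟩
    exact ⟨_, hl.ge, Ici_subset_image_gapMap_of_inCantorSet hp hε
      (inCantorSet_of_gapMap_eq hp hxt hl) hl hxS hball⟩
  · simp only [not_exists] at hfin
    obtain ⟨n, hn⟩ := exists_div_pow_three_lt (p.2 - p.1) hε
    obtain ⟨t, ht, hxt⟩ := exists_mem_nestedGap_of_toFun_ne_none hp (hfin n)
    refine ⟨_, ofList_le_gapMap hp hxt, ?_⟩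
    rw [← image_gapMap_Ioo_nestedGap hp]
    refine image_mono fun y hy => hball ⟨?_, Ioo_nestedGap_subset hp t hy⟩
    refine Icc_subset_ball_of_mem (Ioo_subset_Icc_self hxt) ?_ (Ioo_subset_Icc_self hy)
    calc (nestedGap p t).2 - (nestedGap p t).1 ≤ (p.2 - p.1) / 3 ^ t.length :=
          nestedGap_sub_le hp t
      _ ≤ (p.2 - p.1) / 3 ^ n := by gcongr <;> [norm_num; omega]
      _ < ε := hn

lemma continuous_gapMap (hp : p.1 < p.2) : Continuous (gapMap p) := by
  refine L2.isTopologicalBasis_Ici_ofList.continuous_iff.2 ?_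
  rintro _ ⟨l, rfl⟩
  rcases eq_or_ne l [] with rfl | hl
  · simp [Ici, ofList_nil_le]
  refine isOpen_iff_forall_mem_open.2 fun x hx => ?_
  obtain ⟨t, rfl, hxt⟩ := exists_mem_nestedGap_of_ofList_le_gapMap hp hl hx
  exact ⟨_, fun y hy => ofList_le_gapMap hp hy, isOpen_Ioo, hxt⟩

lemma surjective_restrict_gapMap (hp : p.1 < p.2) {D : Set ℝ} (hD : Ioo p.1 p.2 ⊆ D) :
    Function.Surjective fun y : D => gapMap p y := by
  intro z
  obtain ⟨x, hx, rfl⟩ : z ∈ gapMap p '' Ioo (nestedGap p []).1 (nestedGap p []).2 := by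
    rw [image_gapMap_Ioo_nestedGap hp]
    exact ofList_nil_le z
  exact ⟨⟨x, hD hx⟩, rfl⟩

lemma isOpenMap_restrict_gapMap (hp : p.1 < p.2) {D : Set ℝ} (hD₁ : Ioo p.1 p.2 ⊆ D)
    (hD₂ : D ⊆ Icc p.1 p.2) : IsOpenMap fun y : D => gapMap p y := by
  intro U hU
  refine L2.isTopologicalBasis_Ici_ofList.isOpen_iff.2 ?_
  rintro _ ⟨y, hyU, rfl⟩
  have hS : Subtype.val '' U ∈ 𝓝[Ioo p.1 p.2] (y : ℝ) := by
    refine nhdsWithin_mono _ hD₁ ?_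
    rw [← map_nhds_subtype_val]
    exact Filter.image_mem_map (hU.mem_nhds hyU)
  obtain ⟨l, hl, hsub⟩ :=
    exists_Ici_subset_image_gapMap hp (hD₂ y.2) (mem_image_of_mem _ hyU) hS
  rw [image_image] at hsub
  exact ⟨_, ⟨l, rfl⟩, hl, hsub⟩

end GapMap

/-- For all reals `a < b`, each of the intervals `(a,b)`, `[a,b)` and `[a,b]`
(as subspaces of `ℝ`) admits a surjective interior map onto `𝐋₂`; moreover the map on `[a,b]`
can be chosen to send both endpoints to the root of `L₂` (the empty sequence). -/
theorem statement12 (a b : ℝ) (hab : a < b) :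
    (∃ f : (Set.Ioo a b) → L2, Function.Surjective f ∧ Continuous f ∧ IsOpenMap f) ∧
    (∃ f : (Set.Ico a b) → L2, Function.Surjective f ∧ Continuous f ∧ IsOpenMap f) ∧
    (∃ f : (Set.Icc a b) → L2, Function.Surjective f ∧ Continuous f ∧ IsOpenMap f ∧
      f ⟨a, le_refl a, le_of_lt hab⟩ = Lgen.ofList ([] : List Bool) ∧
      f ⟨b, le_of_lt hab, le_refl b⟩ = Lgen.ofList ([] : List Bool)) := by
  have hp : (a, b).1 < (a, b).2 := hab
  have hinterior (D : Set ℝ) (hD₁ : Ioo a b ⊆ D) (hD₂ : D ⊆ Icc a b) :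
      let f := fun y : D => gapMap (a, b) y
      Function.Surjective f ∧ Continuous f ∧ IsOpenMap f :=
    ⟨surjective_restrict_gapMap hp hD₁, (continuous_gapMap hp).comp continuous_subtype_val,
      isOpenMap_restrict_gapMap hp hD₁ hD₂⟩
  refine ⟨⟨_, hinterior _ subset_rfl Ioo_subset_Icc_self⟩,
    ⟨_, hinterior _ Ioo_subset_Ico_self Ico_subset_Icc_self⟩, ?_⟩
  obtain ⟨hsurj, hcont, hopen⟩ := hinterior (Icc a b) Ioo_subset_Icc_self subset_rfl
  exact ⟨_, hsurj, hcont, hopen, gapMap_of_notMem hp (by simp), gapMap_of_notMem hp (by simp)⟩
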